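/- Given a unification problem P with solved form S = (x̄=ū ∧ ȳ=v̄), the canonical S-based cyclic unifier ⟨η_S, R_S⟩, where η_S = {x̄ ↦ ū} and R_S = {ȳ → v̄}, is most general among all S-based cyclic unifiers of P: for any S-based cyclic unifier ⟨η, R_S⟩, η = η_S η. -/

import Mathlib

/-- Finite first-order terms. -/
inductive Tm (F V : Type) : Type
  | var : V → Tm F V
  | app : F → List (Tm F V) → Tm F V

namespace Tm
variable {F V W : Type}

/-- Application of a substitution to a term. -/
def subst (σ : V → Tm F W) : Tm F V → Tm F W
  | .var x => σ x
  | .app f l => .app f (l.attach.map fun t => t.1.subst σ)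
  decreasing_by simp only [Tm.app.sizeOf_spec]; have := List.sizeOf_lt_of_mem t.2; omega

/-- `x` occurs in `t`. -/
inductive HasVar (x : V) : Tm F V → Prop
  | var : HasVar x (.var x)
  | app {f l t} : t ∈ l → HasVar x t → HasVar x (.app f l)

/-- `t` is not a variable. -/
def NonVar (t : Tm F V) : Prop := ∀ z, t ≠ .var z

end Tm

/-- An equation is an oriented pair of terms; a unification problem is a finite
multiset of equations. -/
abbrev Eqn (F V : Type) := Tm F V × Tm F V

/-- One-step rewriting where variables are treated as constants (rules applied
literally, closure under contexts). -/
inductive GRw {F V : Type} (R : Set (Tm F V × Tm F V)) : Tm F V → Tm F V → Prop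
  | rule {l r} : (l, r) ∈ R → GRw R l r
  | app (f : F) (pre post : List (Tm F V)) {s t} :
      GRw R s t → GRw R (.app f (pre ++ s :: post)) (.app f (pre ++ t :: post))

/-- Evaluation of a finite term in an `F`-algebra `T` (e.g. the algebra of
possibly infinite rational trees) under an assignment of the variables. -/
def ev {F V T : Type} (ap : F → List T → T) (θ : V → T) : Tm F V → T
  | .var x => θ x
  | .app f l => ap f (l.attach.map fun t => ev ap θ t.1)
  decreasing_by simp only [Tm.app.sizeOf_spec]; have := List.sizeOf_lt_of_mem t.2; omega

/-- Constructor-injectivity, as in the algebra of (finite or infinite rational)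
trees. -/
def InjAp {F T : Type} (ap : F → List T → T) : Prop :=
  ∀ f l g m, ap f l = ap g m → f = g ∧ l = m

/-- `θ` solves every equation of `P` (in the tree algebra `T`). -/
def Solves {F V T : Type} (ap : F → List T → T) (θ : V → T)
    (P : Multiset (Eqn F V)) : Prop :=
  ∀ e ∈ P, ev ap θ e.1 = ev ap θ e.2

section Cyclic
variable {F V : Type}

/-- The cyclic variables (left-hand sides) of a cyclic rewrite system. -/
def cycVars (Rc : Multiset (V × Tm F V)) : Set V := {y | ∃ v, (y, v) ∈ Rc}

/-- `Rc` is a cyclic rewrite system `{ȳ → v̄}`: pairwise distinct variable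
left-hand sides, non-variable right-hand sides, each containing some `y ∈ ȳ`. -/
def CyclicSystem (Rc : Multiset (V × Tm F V)) : Prop :=
  (Rc.map Prod.fst).Nodup ∧
  ∀ yv ∈ Rc, (yv.2 : Tm F V).NonVar ∧ ∃ z ∈ cycVars Rc, Tm.HasVar z yv.2

/-- The ground rules of `Rc` instantiated by `η`:  `{ȳ → v̄η}`. -/
def cycRules (η : V → Tm F V) (Rc : Multiset (V × Tm F V)) :
    Set (Tm F V × Tm F V) :=
  {p | ∃ yv ∈ Rc, p = (Tm.var yv.1, Tm.subst η yv.2)}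

/-- A cyclic unifier `⟨η, Rc⟩` of a unification problem `P`:
`Dom(η) ⊆ Var(P) ∖ ȳ`, `Ran(η) ∩ ȳ = ∅`, `Ran(η) ∩ Dom(η) = ∅`;
`P` and `P ∧ Rc` have the same solutions (in every tree algebra); and for every
equation `u = v` of `P`, `uη` and `vη` are joinable by `Rcη` (variables treated
as constants), equivalently congruent modulo the congruence closure of `Rcη`. -/
def CyclicUnifier (P : Multiset (Eqn F V)) (η : V → Tm F V)
    (Rc : Multiset (V × Tm F V)) : Prop :=
  CyclicSystem Rc ∧
  (∀ x, η x ≠ .var x →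
    ((∃ e ∈ P, Tm.HasVar x e.1 ∨ Tm.HasVar x e.2) ∧ x ∉ cycVars Rc)) ∧
  (∀ x, η x ≠ .var x → ∀ z, Tm.HasVar z (η x) → z ∉ cycVars Rc ∧ η z = .var z) ∧
  (∀ (T : Type) (ap : F → List T → T), InjAp ap → ∀ θ : V → T,
    Solves ap θ P ↔ Solves ap θ (P + Rc.map fun yv => (Tm.var yv.1, yv.2))) ∧
  (∀ e ∈ P, ∃ w, Relation.ReflTransGen (GRw (cycRules η Rc)) (Tm.subst η e.1) w ∧
      Relation.ReflTransGen (GRw (cycRules η Rc)) (Tm.subst η e.2) w)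

end Cyclic

namespace Tm
variable {F V : Type}

/-- Size of a term (variables have size 0). -/
def size : Tm F V → ℕ
  | .var _ => 0
  | .app _ l => 1 + (l.attach.map fun t => t.1.size).sum
  decreasing_by simp only [Tm.app.sizeOf_spec]; have := List.sizeOf_lt_of_mem t.2; omega

end Tm

section Unification

variable {F V : Type} [DecidableEq V]

/-- The substitution `{x ↦ s}`. -/
def single (x : V) (s : Tm F V) : V → Tm F V := fun z => if z = x then s else .var z

/-- Apply `{x ↦ s}` to every term of a problem. -/
def substProb (x : V) (s : Tm F V) (P : Multiset (Eqn F V)) : Multiset (Eqn F V) :=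
  P.map fun e => (e.1.subst (single x s), e.2.subst (single x s))

/-- `x` occurs in the problem `P`. -/
def VarInProb (x : V) (P : Multiset (Eqn F V)) : Prop :=
  ∃ e ∈ P, Tm.HasVar x e.1 ∨ Tm.HasVar x e.2

/-- The unification rules other than Merep; `none` stands for `⊥`. -/
inductive UStep1 : Multiset (Eqn F V) → Option (Multiset (Eqn F V)) → Prop
  | remove (s P) : UStep1 ((s, s) ::ₘ P) (some P)
  | decomp (f ss ts P) : ss.length = ts.length →
      UStep1 ((.app f ss, .app f ts) ::ₘ P) (some ((ss.zip ts : List (Eqn F V)) + P))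
  | conflict (f g ss ts P) : f ≠ g ∨ ss.length ≠ ts.length →
      UStep1 ((.app f ss, .app g ts) ::ₘ P) none
  | choose (x y P) : ¬ VarInProb x P → VarInProb y P →
      UStep1 ((.var y, .var x) ::ₘ P) (some ((.var x, .var y) ::ₘ P))
  | coalesce (x y P) : x ≠ y → VarInProb x P → VarInProb y P →
      UStep1 ((.var x, .var y) ::ₘ P) (some ((.var x, .var y) ::ₘ substProb x (.var y) P))
  | swap (u x P) : u.NonVar → UStep1 ((u, .var x) ::ₘ P) (some ((.var x, u) ::ₘ P))
  | merge (x s t P) : 0 < s.size → s.size ≤ t.size →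
      UStep1 ((.var x, s) ::ₘ (.var x, t) ::ₘ P)
        (some ((.var x, s) ::ₘ (s, t) ::ₘ P))
  | replace (x s P) : ¬ Tm.HasVar x s → s.NonVar → VarInProb x P →
      UStep1 ((.var x, s) ::ₘ P) (some ((.var x, s) ::ₘ substProb x s P))

/-- The full set of unification rules, including Merep. -/
inductive UStep : Multiset (Eqn F V) → Option (Multiset (Eqn F V)) → Prop
  | base {P Q} : UStep1 P Q → UStep P Q
  | merep (x y s P) : Tm.HasVar x s → s.NonVar → ¬ Tm.HasVar y s → ¬ VarInProb y P →
      (∀ Q, ¬ UStep1 ((.var y, .var x) ::ₘ (.var x, s) ::ₘ P) Q) →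
      UStep ((.var y, .var x) ::ₘ (.var x, s) ::ₘ P)
        (some ((.var y, s) ::ₘ (.var x, s) ::ₘ P))

end Unification

section Helpers
variable {F V : Type}

theorem Tm.indOn {motive : Tm F V → Prop}
    (hv : ∀ x, motive (.var x))
    (ha : ∀ f l, (∀ t ∈ l, motive t) → motive (.app f l)) : ∀ t, motive t
  | .var x => hv x
  | .app f l => ha f l (fun t ht => Tm.indOn hv ha t)
  decreasing_by simp only [Tm.app.sizeOf_spec]; have := List.sizeOf_lt_of_mem ht; omega

@[simp] theorem subst_var (σ : V → Tm F V) (x : V) : Tm.subst σ (.var x) = σ x := by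
  simp [Tm.subst]

@[simp] theorem subst_app (σ : V → Tm F V) (f : F) (l : List (Tm F V)) :
    Tm.subst σ (.app f l) = .app f (l.map (Tm.subst σ)) := by
  rw [Tm.subst]
  congr 1
  simp [List.attach_map_val]

end Helpers

@[simp] theorem hasVar_var_iff {z x : V} : Tm.HasVar z (Tm.var x : Tm F V) ↔ z = x := by
  constructor
  · rintro h; cases h; rfl
  · rintro rfl; exact .var

theorem hasVar_app_iff {z : V} {f : F} {l : List (Tm F V)} :
    Tm.HasVar z (.app f l) ↔ ∃ t ∈ l, Tm.HasVar z t := by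
  constructor
  · rintro h; cases h with | app hm ht => exact ⟨_, hm, ht⟩
  · rintro ⟨t, hm, ht⟩; exact .app hm ht

theorem subst_subst (σ τ : V → Tm F V) (t : Tm F V) :
    Tm.subst σ (Tm.subst τ t) = Tm.subst (fun z => Tm.subst σ (τ z)) t := by
  induction t using Tm.indOn with
  | hv x => simp
  | ha f l ih =>
    simp only [subst_app, List.map_map]
    congr 1
    exact List.map_congr_left (fun t ht => ih t ht)

theorem hasVar_subst {σ : V → Tm F V} {t : Tm F V} {w : V}
    (h : Tm.HasVar w (Tm.subst σ t)) : ∃ z, Tm.HasVar z t ∧ Tm.HasVar w (σ z) := by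
  induction t using Tm.indOn with
  | hv x => exact ⟨x, .var, by simpa using h⟩
  | ha f l ih =>
    rw [subst_app, hasVar_app_iff] at h
    obtain ⟨t', ht', hw⟩ := h
    obtain ⟨s, hs, rfl⟩ := List.mem_map.1 ht'
    obtain ⟨z, hz, hwz⟩ := ih s hs hw
    exact ⟨z, .app hs hz, hwz⟩

section Rewriting
variable {F V : Type} {R : Set (Tm F V × Tm F V)}

open Relation


theorem forall₂_imp_mem {α β : Type*} {P Q : α → β → Prop} :
    ∀ {l : List α} {m : List β}, List.Forall₂ P l m →
      (∀ a ∈ l, ∀ b, P a b → Q a b) → List.Forall₂ Q l m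
  | _, _, .nil, _ => .nil
  | _, _, .cons h t, hi => .cons (hi _ (List.mem_cons_self) _ h)
      (forall₂_imp_mem t fun a ha b hb => hi a (List.mem_cons_of_mem _ ha) b hb)

/-- Parallel rewriting for variable-lhs systems. -/
inductive Par (R : Set (Tm F V × Tm F V)) : Tm F V → Tm F V → Prop
  | var (x) : Par R (.var x) (.var x)
  | rule {l r} : (l, r) ∈ R → Par R l r
  | app (f) {l m} : List.Forall₂ (Par R) l m → Par R (.app f l) (.app f m)

theorem Par.refl : ∀ t : Tm F V, Par R t t := by
  intro t
  induction t using Tm.indOn with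
  | hv x => exact .var x
  | ha f l ih => exact .app f (List.forall₂_same.2 ih)

theorem grw_par {s t : Tm F V} (h : GRw R s t) : Par R s t := by
  induction h with
  | rule h => exact .rule h
  | app f pre post _ ih =>
    exact .app f (List.rel_append (List.forall₂_same.2 fun x _ => Par.refl x)
      (List.Forall₂.cons ih (List.forall₂_same.2 fun x _ => Par.refl x)))

theorem rtg_context {s t : Tm F V} (f : F) (pre post : List (Tm F V))
    (h : ReflTransGen (GRw R) s t) :
    ReflTransGen (GRw R) (.app f (pre ++ s :: post)) (.app f (pre ++ t :: post)) := by
  induction h with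
  | refl => exact .refl
  | tail _ h ih => exact ih.tail (.app f pre post h)

theorem rtg_forall2 (f : F) : ∀ (pre l m : List (Tm F V)),
    List.Forall₂ (ReflTransGen (GRw R)) l m →
    ReflTransGen (GRw R) (.app f (pre ++ l)) (.app f (pre ++ m)) := by
  intro pre l m h
  induction h generalizing pre with
  | nil => exact .refl
  | cons hab h ih =>
    rename_i a b l' m'
    refine .trans (rtg_context f pre l' hab) ?_
    have := ih (pre ++ [b])
    simpa using this

theorem par_rtg : ∀ {s t : Tm F V}, Par R s t → ReflTransGen (GRw R) s t := by
  intro s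
  induction s using Tm.indOn with
  | hv x =>
    intro t h
    cases h with
    | var => exact .refl
    | rule h => exact .single (.rule h)
  | ha f l ih =>
    intro t h
    cases h with
    | rule h => exact .single (.rule h)
    | app _ hf =>
      rename_i m
      have hF : List.Forall₂ (ReflTransGen (GRw R)) l m :=
        forall₂_imp_mem hf fun a ha b hb => ih a ha hb
      simpa using rtg_forall2 f [] l m hF

end Rewriting

section Confluence
variable {F V : Type} {R : Set (Tm F V × Tm F V)}
open Relation

theorem forall₂_map_of_mem {α β : Type*} {Q : β → β → Prop} {g h : α → β} :
    ∀ {l : List α}, (∀ a ∈ l, Q (g a) (h a)) → List.Forall₂ Q (l.map g) (l.map h)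
  | [], _ => .nil
  | a :: l, hi => .cons (hi a (List.mem_cons_self))
      (forall₂_map_of_mem fun a ha => hi a (List.mem_cons_of_mem _ ha))

theorem forall₂_trans' {α : Type*} {Q : α → α → Prop}
    (htr : ∀ a b c, Q a b → Q b c → Q a c) :
    ∀ {l m n : List α}, List.Forall₂ Q l m → List.Forall₂ Q m n → List.Forall₂ Q l n
  | _, _, _, .nil, .nil => .nil
  | _, _, _, .cons h1 t1, .cons h2 t2 => .cons (htr _ _ _ h1 h2) (forall₂_trans' htr t1 t2)

theorem forall₂_diamond :
    ∀ {l m1 m2 : List (Tm F V)}, (∀ a ∈ l, ∀ b c, Par R a b → Par R a c →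
      ∃ d, Par R b d ∧ Par R c d) →
    List.Forall₂ (Par R) l m1 → List.Forall₂ (Par R) l m2 →
    ∃ m3, List.Forall₂ (Par R) m1 m3 ∧ List.Forall₂ (Par R) m2 m3 := by
  intro l
  induction l with
  | nil => rintro m1 m2 _ h1 h2; cases h1; cases h2; exact ⟨[], .nil, .nil⟩
  | cons a l ihl =>
    intro m1 m2 hd h1 h2
    cases h1 with | cons hb h1' =>
    cases h2 with | cons hc h2' =>
    obtain ⟨d, hd1, hd2⟩ := hd a (List.mem_cons_self) _ _ hb hc
    obtain ⟨m3, hm1, hm2⟩ := ihl (fun a ha => hd a (List.mem_cons_of_mem _ ha)) h1' h2'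
    exact ⟨d :: m3, .cons hd1 hm1, .cons hd2 hm2⟩

theorem par_diamond (hR : ∀ p ∈ R, ∃ y, p.1 = Tm.var y)
    (hfun : ∀ l r1 r2, (l, r1) ∈ R → (l, r2) ∈ R → r1 = r2) :
    ∀ t t1 t2 : Tm F V, Par R t t1 → Par R t t2 → ∃ t3, Par R t1 t3 ∧ Par R t2 t3 := by
  intro t
  induction t using Tm.indOn with
  | hv x =>
    intro t1 t2 h1 h2
    cases h1 with
    | var => exact ⟨t2, h2, Par.refl _⟩
    | rule h =>
      cases h2 with
      | var => exact ⟨t1, Par.refl _, .rule h⟩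
      | rule h' =>
        obtain rfl := hfun _ _ _ h h'
        exact ⟨t1, Par.refl _, Par.refl _⟩
  | ha f l ih =>
    intro t1 t2 h1 h2
    cases h1 with
    | rule h => obtain ⟨y, hy⟩ := hR _ h; cases hy
    | app _ hf1 =>
      cases h2 with
      | rule h => obtain ⟨y, hy⟩ := hR _ h; cases hy
      | app _ hf2 =>
        obtain ⟨m3, hm1, hm2⟩ := forall₂_diamond ih hf1 hf2
        exact ⟨.app f m3, .app f hm1, .app f hm2⟩

theorem rtg_par_rtg {a b : Tm F V} (h : ReflTransGen (Par R) a b) :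
    ReflTransGen (GRw R) a b := by
  induction h with
  | refl => exact .refl
  | tail _ h ih => exact ih.trans (par_rtg h)

theorem conv_join (hR : ∀ p ∈ R, ∃ y, p.1 = Tm.var y)
    (hfun : ∀ l r1 r2, (l, r1) ∈ R → (l, r2) ∈ R → r1 = r2)
    {a b : Tm F V} (h : EqvGen (GRw R) a b) :
    Join (ReflTransGen (GRw R)) a b := by
  have hd : ∀ a b c : Tm F V, Par R a b → Par R a c →
      ∃ d, ReflGen (Par R) b d ∧ ReflTransGen (Par R) c d := by
    intro a b c h1 h2
    obtain ⟨d, hd1, hd2⟩ := par_diamond hR hfun a b c h1 h2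
    exact ⟨d, .single hd1, .single hd2⟩
  have heq := equivalence_join_reflTransGen hd
  have hj : Join (ReflTransGen (Par R)) a b := by
    induction h with
    | rel a b h => exact ⟨b, .single (grw_par h), .refl⟩
    | refl a => exact heq.refl a
    | symm a b _ ih => exact heq.symm ih
    | trans a b c _ _ ih1 ih2 => exact heq.trans ih1 ih2
  obtain ⟨c, h1, h2⟩ := hj
  exact ⟨c, rtg_par_rtg h1, rtg_par_rtg h2⟩

end Confluence

section ConvLemmas
variable {F V : Type} {R : Set (Tm F V × Tm F V)}
open Relation

theorem rtg_app_inv (hR : ∀ p ∈ R, ∃ y, p.1 = Tm.var y) {f : F} {l : List (Tm F V)}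
    {w : Tm F V} (h : ReflTransGen (GRw R) (.app f l) w) :
    ∃ m, w = .app f m ∧ List.Forall₂ (ReflTransGen (GRw R)) l m := by
  induction h with
  | refl => exact ⟨l, rfl, List.forall₂_same.2 fun _ _ => .refl⟩
  | tail _ hstep ih =>
    obtain ⟨m, rfl, hf⟩ := ih
    cases hstep with
    | rule h => obtain ⟨y, hy⟩ := hR _ h; cases hy
    | app f' pre post hst =>
      rename_i s t
      refine ⟨pre ++ s :: post, rfl, forall₂_trans' (fun a b c h1 h2 => h1.trans h2) hf ?_⟩
      exact List.rel_append (List.forall₂_same.2 fun _ _ => .refl)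
        (.cons (.single hst) (List.forall₂_same.2 fun _ _ => .refl))

theorem no_step_of_no_cyc {cyc : Set V} (hRc : ∀ p ∈ R, ∃ y ∈ cyc, p.1 = Tm.var y)
    {t u : Tm F V} (h : GRw R t u) : ∃ z ∈ cyc, Tm.HasVar z t := by
  induction h with
  | rule h =>
    rename_i l r
    obtain ⟨y, hy, he⟩ := hRc _ h
    have hl : l = Tm.var y := he
    exact ⟨y, hy, by rw [hl]; exact .var⟩
  | app f pre post _ ih =>
    obtain ⟨z, hz, hv⟩ := ih
    exact ⟨z, hz, .app (by simp) hv⟩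

theorem rtg_eq_of_no_cyc {cyc : Set V} (hRc : ∀ p ∈ R, ∃ y ∈ cyc, p.1 = Tm.var y)
    {t w : Tm F V} (ht : ∀ z, Tm.HasVar z t → z ∉ cyc)
    (h : ReflTransGen (GRw R) t w) : t = w := by
  rcases Relation.ReflTransGen.cases_head h with rfl | ⟨c, hc, _⟩
  · rfl
  · obtain ⟨z, hz, hv⟩ := no_step_of_no_cyc hRc hc
    exact absurd hz (ht z hv)

theorem conv_context {s t : Tm F V} (f : F) (pre post : List (Tm F V))
    (h : EqvGen (GRw R) s t) :
    EqvGen (GRw R) (.app f (pre ++ s :: post)) (.app f (pre ++ t :: post)) := by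
  induction h with
  | rel _ _ h => exact .rel _ _ (.app f pre post h)
  | refl => exact .refl _
  | symm a b _ ih => exact .symm _ _ ih
  | trans a b c _ _ ih1 ih2 => exact .trans _ _ _ ih1 ih2

theorem conv_forall2 (f : F) : ∀ (pre l m : List (Tm F V)),
    List.Forall₂ (EqvGen (GRw R)) l m →
    EqvGen (GRw R) (.app f (pre ++ l)) (.app f (pre ++ m)) := by
  intro pre l m h
  induction h generalizing pre with
  | nil => exact .refl _
  | cons hab h ih =>
    rename_i a b l' m'
    refine .trans _ _ _ (conv_context f pre l' hab) ?_
    have := ih (pre ++ [b])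
    simpa using this

theorem conv_subst {θ1 θ2 : V → Tm F V} (h : ∀ z, EqvGen (GRw R) (θ1 z) (θ2 z)) :
    ∀ t : Tm F V, EqvGen (GRw R) (Tm.subst θ1 t) (Tm.subst θ2 t) := by
  intro t
  induction t using Tm.indOn with
  | hv x => simpa using h x
  | ha f l ih =>
    rw [subst_app, subst_app]
    have := conv_forall2 (R := R) f [] (l.map (Tm.subst θ1)) (l.map (Tm.subst θ2))
      (forall₂_map_of_mem ih)
    simpa using this

theorem rtg_conv {a b : Tm F V} (h : ReflTransGen (GRw R) a b) : EqvGen (GRw R) a b := by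
  induction h with
  | refl => exact .refl _
  | tail _ h ih => exact .trans _ _ _ ih (.rel _ _ h)

theorem join_conv {a b : Tm F V}
    (h : ∃ w, ReflTransGen (GRw R) a w ∧ ReflTransGen (GRw R) b w) :
    EqvGen (GRw R) a b := by
  obtain ⟨w, h1, h2⟩ := h
  exact .trans _ _ _ (rtg_conv h1) (.symm _ _ (rtg_conv h2))

end ConvLemmas

section Preserve
variable {F V : Type} [DecidableEq V]
open Relation

theorem cycRules_var {η : V → Tm F V} {Rc : Multiset (V × Tm F V)} :
    ∀ p ∈ cycRules η Rc, ∃ y, p.1 = Tm.var y := by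
  rintro p ⟨yv, _, rfl⟩; exact ⟨yv.1, rfl⟩

theorem forall₂_zip_join {α β : Type*} {r : α → β → Prop} :
    ∀ {l1 l2 : List α} {m : List β}, List.Forall₂ r l1 m → List.Forall₂ r l2 m →
      ∀ p ∈ l1.zip l2, ∃ c, r p.1 c ∧ r p.2 c
  | _, _, _, .nil, _, p, hp => by simp at hp
  | _, _, _, .cons ha h1, .cons hb h2, p, hp => by
      rcases List.mem_cons.1 hp with rfl | hp'
      · exact ⟨_, ha, hb⟩
      · exact forall₂_zip_join h1 h2 p hp'

theorem conv_subst_single {η : V → Tm F V} {R : Set (Tm F V × Tm F V)} (x : V) (s : Tm F V)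
    (hxs : EqvGen (GRw R) (η x) (Tm.subst η s)) (t : Tm F V) :
    EqvGen (GRw R) (Tm.subst η (Tm.subst (single x s) t)) (Tm.subst η t) := by
  rw [subst_subst]
  apply conv_subst
  intro z
  unfold single
  by_cases hz : z = x
  · subst hz
    simpa using EqvGen.symm _ _ hxs
  · simp [hz]
    exact .refl _

theorem ustep_preserves {η : V → Tm F V} {Rc : Multiset (V × Tm F V)}
    (hfun : ∀ l r1 r2, (l, r1) ∈ cycRules η Rc → (l, r2) ∈ cycRules η Rc → r1 = r2)
    {A B : Multiset (Eqn F V)} (hstep : UStep A (some B))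
    (hI : ∀ e ∈ A, EqvGen (GRw (cycRules η Rc)) (Tm.subst η e.1) (Tm.subst η e.2)) :
    ∀ e ∈ B, EqvGen (GRw (cycRules η Rc)) (Tm.subst η e.1) (Tm.subst η e.2) := by
  set R := cycRules η Rc with hR
  cases hstep with
  | merep x y s P hx hnv hy hvp hno =>
    intro e he
    rcases Multiset.mem_cons.1 he with rfl | he'
    · have h1 := hI _ (Multiset.mem_cons_self _ _)
      have h2 := hI (Tm.var x, s) (Multiset.mem_cons_of_mem (Multiset.mem_cons_self _ _))
      exact .trans _ _ _ h1 h2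
    · exact hI e (Multiset.mem_cons_of_mem he')
  | base h =>
    cases h with
    | remove s P =>
      intro e he; exact hI e (Multiset.mem_cons_of_mem he)
    | decomp f ss ts P hlen =>
      intro e he
      rcases Multiset.mem_add.1 he with he' | he'
      · have hc := hI _ (Multiset.mem_cons_self _ _)
        have hj := conv_join cycRules_var hfun hc
        rw [subst_app, subst_app] at hj
        obtain ⟨w, h1, h2⟩ := hj
        obtain ⟨m1, rfl, hf1⟩ := rtg_app_inv cycRules_var h1
        obtain ⟨m2, heq, hf2⟩ := rtg_app_inv cycRules_var h2
        obtain ⟨-, rfl⟩ := Tm.app.inj heq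
        have he2 : e ∈ ss.zip ts := by exact_mod_cast he'
        have hmem : (Tm.subst η e.1, Tm.subst η e.2) ∈
            (ss.map (Tm.subst η)).zip (ts.map (Tm.subst η)) := by
          rw [List.zip_map]
          exact List.mem_map.2 ⟨e, he2, rfl⟩
        obtain ⟨c, hc1, hc2⟩ := forall₂_zip_join hf1 hf2 _ hmem
        exact join_conv ⟨c, hc1, hc2⟩
      · exact hI e (Multiset.mem_cons_of_mem he')
    | choose x y P hx hy =>
      intro e he
      rcases Multiset.mem_cons.1 he with rfl | he'
      · exact .symm _ _ (hI _ (Multiset.mem_cons_self _ _))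
      · exact hI e (Multiset.mem_cons_of_mem he')
    | coalesce x y P hxy hx hy =>
      intro e he
      have hxs : EqvGen (GRw R) (η x) (Tm.subst η (Tm.var y)) := by
        have := hI _ (Multiset.mem_cons_self _ _)
        simpa using this
      rcases Multiset.mem_cons.1 he with rfl | he'
      · simpa using hxs
      · obtain ⟨e0, he0, rfl⟩ := Multiset.mem_map.1 he'
        have h1 := conv_subst_single x (Tm.var y) hxs e0.1
        have h2 := conv_subst_single x (Tm.var y) hxs e0.2
        have h0 := hI e0 (Multiset.mem_cons_of_mem he0)
        exact .trans _ _ _ h1 (.trans _ _ _ h0 (.symm _ _ h2))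
    | swap u x P hnv =>
      intro e he
      rcases Multiset.mem_cons.1 he with rfl | he'
      · exact .symm _ _ (hI _ (Multiset.mem_cons_self _ _))
      · exact hI e (Multiset.mem_cons_of_mem he')
    | merge x s t P hs hst =>
      intro e he
      rcases Multiset.mem_cons.1 he with rfl | he'
      · exact hI _ (Multiset.mem_cons_self _ _)
      rcases Multiset.mem_cons.1 he' with rfl | he''
      · have h1 := hI _ (Multiset.mem_cons_self _ _)
        have h2 := hI (Tm.var x, t) (Multiset.mem_cons_of_mem (Multiset.mem_cons_self _ _))
        exact .trans _ _ _ (.symm _ _ h1) h2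
      · exact hI e (Multiset.mem_cons_of_mem (Multiset.mem_cons_of_mem he''))
    | replace x s P hocc hnv hx =>
      intro e he
      have hxs : EqvGen (GRw R) (η x) (Tm.subst η s) := by
        have := hI _ (Multiset.mem_cons_self _ _)
        simpa using this
      rcases Multiset.mem_cons.1 he with rfl | he'
      · simpa using hxs
      · obtain ⟨e0, he0, rfl⟩ := Multiset.mem_map.1 he'
        have h1 := conv_subst_single x s hxs e0.1
        have h2 := conv_subst_single x s hxs e0.2
        have h0 := hI e0 (Multiset.mem_cons_of_mem he0)
        exact .trans _ _ _ h1 (.trans _ _ _ h0 (.symm _ _ h2))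

end Preserve

section Main
variable {F V : Type} [DecidableEq V]
open Relation

theorem key_unique {α β : Type*} : ∀ {l : List (α × β)}, (l.map Prod.fst).Nodup →
    ∀ {a : α} {b c : β}, (a, b) ∈ l → (a, c) ∈ l → b = c := by
  intro l
  induction l with
  | nil => intro _ a b c h; simp at h
  | cons p l ih =>
    intro hn a b c h1 h2
    simp only [List.map_cons, List.nodup_cons] at hn
    rcases List.mem_cons.1 h1 with h1' | h1'
    · subst h1'
      rcases List.mem_cons.1 h2 with h2' | h2'
      · injection h2' with _ h; exact h.symm
      · exact absurd (List.mem_map.2 ⟨(a, c), h2', rfl⟩) hn.1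
    · rcases List.mem_cons.1 h2 with h2' | h2'
      · subst h2'
        exact absurd (List.mem_map.2 ⟨(a, b), h1', rfl⟩) hn.1
      · exact ih hn.2 h1' h2'

theorem mem_of_lookup_eq_some' {l : List (V × Tm F V)} {z : V} {u : Tm F V}
    (h : l.lookup z = some u) : (z, u) ∈ l := by
  induction l with
  | nil => simp [List.lookup] at h
  | cons p l ih =>
    obtain ⟨k, v⟩ := p
    rw [List.lookup] at h
    rcases hkz : (z == k) with _ | _
    · rw [hkz] at h
      exact List.mem_cons_of_mem _ (ih h)
    · rw [hkz] at h
      have hk : z = k := by simpa using hkz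
      subst hk
      obtain rfl : v = u := by injection h
      exact List.mem_cons_self

end Main


/-- given a unification problem `P` with solved form
`S = (x̄ = ū ∧ ȳ = v̄)`, the canonical `S`-based cyclic unifier `⟨η_S, R_S⟩`
(where `η_S = {x̄ ↦ ū}` and `R_S = {ȳ → v̄}`) is most general among all
`S`-based cyclic unifiers of `P`: for any `S`-based cyclic unifier `⟨η, R_S⟩`
of `P`, `η = η_S η`. -/
theorem canonical_cyclic_unifier_most_general
    {F V : Type} [DecidableEq V] (P : Multiset (Eqn F V))
    (xs ys : List (V × Tm F V))
    -- S (given by the two lists xs, ys) is a solved form: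
    (hnodup : ((xs ++ ys).map Prod.fst).Nodup)
    (hxs : ∀ p ∈ xs, ∀ z, Tm.HasVar z p.2 → ∀ q ∈ xs ++ ys, q.1 ≠ z)
    (hys : ∀ p ∈ ys, (p.2 : Tm F V).NonVar ∧
      (∀ z, Tm.HasVar z p.2 → ∀ q ∈ xs, q.1 ≠ z) ∧
      (∃ z, Tm.HasVar z p.2 ∧ ∃ q ∈ ys, q.1 = z))
    -- S is a solved form *of P*: it is reached from P by the unification rules
    -- and is in normal form
    (hreach : Relation.ReflTransGen
      (fun A B : Option (Multiset (Eqn F V)) => ∃ P', A = some P' ∧ UStep P' B)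
      (some P)
      (some (((xs ++ ys).map fun p => ((Tm.var p.1 : Tm F V), p.2) : List (Eqn F V)) : Multiset (Eqn F V))))
    (hnf : ∀ Q, ¬ UStep
      ((((xs ++ ys).map fun p => ((Tm.var p.1 : Tm F V), p.2) : List (Eqn F V)) : Multiset (Eqn F V))) Q)
    -- ⟨η, R_S⟩ is an S-based cyclic unifier of P
    (η : V → Tm F V)
    (hcu : CyclicUnifier P η (↑ys : Multiset (V × Tm F V))) :
    -- then η = η_S η, where η_S = {x̄ ↦ ū}
    ∀ z : V, η z = Tm.subst η ((xs.lookup z).getD (Tm.var z)) := by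
  obtain ⟨hsys, hdom, hran, hsem, hjoin⟩ := hcu
  have hysnd : (ys.map Prod.fst).Nodup := by
    rw [List.map_append] at hnodup; exact hnodup.of_append_right
  have hfun : ∀ l r1 r2, (l, r1) ∈ cycRules η (↑ys : Multiset (V × Tm F V)) →
      (l, r2) ∈ cycRules η (↑ys : Multiset (V × Tm F V)) → r1 = r2 := by
    rintro l r1 r2 ⟨⟨y1, v1⟩, hm1, he1⟩ ⟨⟨y2, v2⟩, hm2, he2⟩
    obtain ⟨h11, h12⟩ := Prod.mk.inj he1
    obtain ⟨h21, h22⟩ := Prod.mk.inj he2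
    have hy : y1 = y2 := Tm.var.inj (h11.symm.trans h21)
    subst hy
    have hv : v1 = v2 := key_unique hysnd (Multiset.mem_coe.1 hm1) (Multiset.mem_coe.1 hm2)
    rw [h12, h22, hv]
  have hRcyc : ∀ p ∈ cycRules η (↑ys : Multiset (V × Tm F V)),
      ∃ y ∈ cycVars (↑ys : Multiset (V × Tm F V)), p.1 = Tm.var y := by
    rintro p ⟨yv, hm, rfl⟩; exact ⟨yv.1, ⟨yv.2, hm⟩, rfl⟩
  have hbase : ∀ e ∈ P, Relation.EqvGen (GRw (cycRules η (↑ys : Multiset (V × Tm F V))))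
      (Tm.subst η e.1) (Tm.subst η e.2) := fun e he => join_conv (hjoin e he)
  have hchain : ∀ A, Relation.ReflTransGen
      (fun A B : Option (Multiset (Eqn F V)) => ∃ P', A = some P' ∧ UStep P' B) (some P) A →
      ∀ Q, A = some Q → ∀ e ∈ Q, Relation.EqvGen (GRw (cycRules η (↑ys : Multiset (V × Tm F V))))
        (Tm.subst η e.1) (Tm.subst η e.2) := by
    intro A h
    induction h with
    | refl =>
      intro Q hQ
      cases Option.some.inj hQ
      exact hbase
    | tail h1 h2 ih =>
      obtain ⟨P', hb, hstep⟩ := h2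
      intro Q hQ
      subst hQ
      exact ustep_preserves hfun hstep (ih P' hb)
  have hIS := hchain _ hreach _ rfl
  intro z
  cases hlk : xs.lookup z with
  | none =>
    simp only [Option.getD_none, subst_var]
  | some u =>
    simp only [Option.getD_some]
    have hzu : (z, u) ∈ xs := mem_of_lookup_eq_some' hlk
    have hmem : ((Tm.var z : Tm F V), u) ∈
        ((((xs ++ ys).map fun p => ((Tm.var p.1 : Tm F V), p.2)) : List (Eqn F V)) :
          Multiset (Eqn F V)) :=
      Multiset.mem_coe.2 (List.mem_map.2 ⟨(z, u), List.mem_append_left _ hzu, rfl⟩)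
    have hconv := hIS _ hmem
    simp only [subst_var] at hconv
    obtain ⟨w, h1, h2⟩ := conv_join cycRules_var hfun hconv
    have hnc1 : ∀ w', Tm.HasVar w' (η z) → w' ∉ cycVars (↑ys : Multiset (V × Tm F V)) := by
      intro w' hw'
      by_cases hez : η z = Tm.var z
      · rw [hez] at hw'
        obtain rfl := hasVar_var_iff.1 hw'
        rintro ⟨v, hv⟩
        have hzys : w' ∈ ys.map Prod.fst := List.mem_map.2 ⟨(w', v), Multiset.mem_coe.1 hv, rfl⟩
        have hzxs : w' ∈ xs.map Prod.fst := List.mem_map.2 ⟨(w', u), hzu, rfl⟩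
        exact List.disjoint_of_nodup_append (by rwa [List.map_append] at hnodup) hzxs hzys
      · exact (hran z hez w' hw').1
    have hnc2 : ∀ w', Tm.HasVar w' (Tm.subst η u) →
        w' ∉ cycVars (↑ys : Multiset (V × Tm F V)) := by
      intro w' hw'
      obtain ⟨z', hz', hwz'⟩ := hasVar_subst hw'
      have hz'n : z' ∉ cycVars (↑ys : Multiset (V × Tm F V)) := by
        rintro ⟨v, hv⟩
        exact hxs (z, u) hzu z' hz' (z', v)
          (List.mem_append_right _ (Multiset.mem_coe.1 hv)) rfl
      by_cases hez : η z' = Tm.var z'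
      · rw [hez] at hwz'
        obtain rfl := hasVar_var_iff.1 hwz'
        exact hz'n
      · exact (hran z' hez w' hwz').1
    have e1 := rtg_eq_of_no_cyc hRcyc hnc1 h1
    have e2 := rtg_eq_of_no_cyc hRcyc hnc2 h2
    rw [e1, e2]
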